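/- arXiv:1810.11228 — 3 statements merged into one kernel-verified Lean document; each statement's English description precedes it below -/
import Mathlib

section
/- Let 0 < α < π. Then {tr(AB) : A ∈ C₃^α, B ∈ C₂^{++}} = (-∞, 2 cos α), and {tr(AB) : A ∈ C₃^α, B ∈ C₂^{+-}} = (2 cos α, ∞). -/
open Matrix Real

abbrev SL2R := Matrix.SpecialLinearGroup (Fin 2) ℝ

noncomputable def Rot (θ : ℝ) : Matrix (Fin 2) (Fin 2) ℝ :=
  !![Real.cos θ, -Real.sin θ; Real.sin θ, Real.cos θ]

/-- The conjugacy class C₃^θ of the rotation R(θ) in SL₂(ℝ). -/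
noncomputable def C3 (θ : ℝ) : Set SL2R :=
  {A | ∃ g : SL2R, A.val = g.val * Rot θ * (g⁻¹).val}

/-- C₂^{++}: the conjugacy class of [[1,0],[1,1]]. -/
def C2pp : Set SL2R := {A | ∃ g : SL2R, A.val = g.val * !![1, 0; 1, 1] * (g⁻¹).val}

/-- C₂^{+-}: the conjugacy class of [[1,0],[-1,1]]. -/
def C2pm : Set SL2R := {A | ∃ g : SL2R, A.val = g.val * !![1, 0; -1, 1] * (g⁻¹).val}

/-! Since the trace is a class function, `tr (g R(α) g⁻¹ · h J h⁻¹) = tr (R(α) · k J k⁻¹)` with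
`k = g⁻¹ h`, where `J = [[1, 0], [ε, 1]]` and `ε = ±1`. Expanding, this trace is
`2 cos α - ε sin α (k₀₁² + k₁₁²)`; the second column of `k ∈ SL₂(ℝ)` is an arbitrary nonzero
vector, so its squared norm fills `(0, ∞)`, and `sin α > 0` decides the direction of the ray. -/

lemma setOf_apply_mul_of_isConj_eq_range {G X : Type*} [Group G] (f : G → X)
    (hf : ∀ g x, f (g * x * g⁻¹) = f x) (a b : G) :
    {t | ∃ A ∈ {A | IsConj a A}, ∃ B ∈ {B | IsConj b B}, t = f (A * B)} =
      Set.range fun k => f (a * (k * b * k⁻¹)) := by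
  ext t
  simp only [Set.mem_ofPred_eq, isConj_iff, Set.mem_range]
  constructor
  · rintro ⟨_, ⟨g, rfl⟩, _, ⟨h, rfl⟩, rfl⟩
    refine ⟨g⁻¹ * h, ?_⟩
    rw [← hf g]
    group
  · rintro ⟨k, rfl⟩
    exact ⟨a, ⟨1, by group⟩, k * b * k⁻¹, ⟨k, rfl⟩, rfl⟩

namespace Matrix.SpecialLinearGroup

variable {n R : Type*} [Fintype n] [DecidableEq n] [CommRing R]

lemma trace_conj (g A : SpecialLinearGroup n R) :
    (g * A * g⁻¹).val.trace = A.val.trace := by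
  rw [coe_mul, coe_mul, trace_mul_cycle, ← coe_mul, inv_mul_cancel, coe_one, Matrix.one_mul]

lemma setOf_val_eq_conj_eq_setOf_isConj (M : SpecialLinearGroup n R) :
    {A : SpecialLinearGroup n R | ∃ g : SpecialLinearGroup n R, A.val = g.val * M.val * (g⁻¹).val} =
      {A | IsConj M A} := by
  ext A
  simp only [Set.mem_ofPred_eq, isConj_iff, ← coe_mul]
  exact exists_congr fun g => Subtype.val_injective.eq_iff.trans eq_comm

lemma sq_add_sq_col_one_pos {R : Type*} [Field R] [LinearOrder R] [IsStrictOrderedRing R]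
    (k : SpecialLinearGroup (Fin 2) R) : 0 < k.val 0 1 ^ 2 + k.val 1 1 ^ 2 := by
  have hdet := k.prop
  rw [det_fin_two] at hdet
  have : k.val 0 1 ≠ 0 ∨ k.val 1 1 ≠ 0 := by
    by_contra! h
    simp [h.1, h.2] at hdet
  rcases this with h | h <;> positivity

end Matrix.SpecialLinearGroup

lemma image_const_sub_mul_Ioi_zero_of_pos {c d : ℝ} (hd : 0 < d) :
    (fun s => c - d * s) '' Set.Ioi 0 = Set.Iio c := by
  ext t
  refine ⟨?_, fun ht => ⟨(c - t) / d, div_pos (sub_pos.2 ht) hd,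
    show c - d * _ = t by rw [mul_div_cancel₀ _ hd.ne']; ring⟩⟩
  rintro ⟨s, hs, rfl⟩
  exact show c - d * s < c by linarith [mul_pos hd hs]

lemma image_const_sub_mul_Ioi_zero_of_neg {c d : ℝ} (hd : d < 0) :
    (fun s => c - d * s) '' Set.Ioi 0 = Set.Ioi c := by
  ext t
  refine ⟨?_, fun ht => ⟨(c - t) / d, div_pos_of_neg_of_neg (sub_neg.2 ht) hd,
    show c - d * _ = t by rw [mul_div_cancel₀ _ hd.ne]; ring⟩⟩
  rintro ⟨s, hs, rfl⟩
  exact show c < c - d * s by linarith [mul_neg_of_neg_of_pos hd hs]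

noncomputable def rotSL (θ : ℝ) : SL2R :=
  ⟨Rot θ, by simp [Rot, det_fin_two_of, ← sq, Real.cos_sq_add_sin_sq]⟩

def lowerUnipotent (ε : ℝ) : SL2R :=
  ⟨!![1, 0; ε, 1], by simp [det_fin_two_of]⟩

lemma C3_eq_setOf_isConj (θ : ℝ) : C3 θ = {A | IsConj (rotSL θ) A} :=
  Matrix.SpecialLinearGroup.setOf_val_eq_conj_eq_setOf_isConj (rotSL θ)

lemma C2pp_eq_setOf_isConj : C2pp = {A | IsConj (lowerUnipotent 1) A} :=
  Matrix.SpecialLinearGroup.setOf_val_eq_conj_eq_setOf_isConj (lowerUnipotent 1)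

lemma C2pm_eq_setOf_isConj : C2pm = {A | IsConj (lowerUnipotent (-1)) A} :=
  Matrix.SpecialLinearGroup.setOf_val_eq_conj_eq_setOf_isConj (lowerUnipotent (-1))

lemma trace_rotSL_mul_conj_lowerUnipotent (θ ε : ℝ) (k : SL2R) :
    (rotSL θ * (k * lowerUnipotent ε * k⁻¹)).val.trace =
      2 * cos θ - ε * sin θ * (k.val 0 1 ^ 2 + k.val 1 1 ^ 2) := by
  have hdet : k.val 0 0 * k.val 1 1 - k.val 0 1 * k.val 1 0 = 1 := by
    rw [← det_fin_two]; exact k.prop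
  rw [Matrix.SpecialLinearGroup.coe_mul, Matrix.SpecialLinearGroup.coe_mul,
    Matrix.SpecialLinearGroup.coe_mul, Matrix.SpecialLinearGroup.coe_inv]
  simp only [adjugate_fin_two, rotSL, lowerUnipotent, Rot, trace_fin_two, mul_apply,
    Fin.sum_univ_two, of_apply, cons_val', cons_val_zero, cons_val_one, empty_val', cons_val_fin_one]
  linear_combination (2 * cos θ) * hdet

lemma range_sq_add_sq_col_one :
    Set.range (fun k : SL2R => k.val 0 1 ^ 2 + k.val 1 1 ^ 2) = Set.Ioi 0 := by
  refine Set.Subset.antisymm (Set.range_subset_iff.2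
    Matrix.SpecialLinearGroup.sq_add_sq_col_one_pos) fun s (hs : 0 < s) => ?_
  have hsqrt : √s ≠ 0 := (Real.sqrt_pos.2 hs).ne'
  refine ⟨⟨!![(√s)⁻¹, 0; 0, √s], by simp [det_fin_two_of, hsqrt]⟩, ?_⟩
  simp [Real.sq_sqrt hs.le]

lemma trace_C3_mul_conj_lowerUnipotent (θ ε : ℝ) :
    {t : ℝ | ∃ A ∈ C3 θ, ∃ B ∈ {B | IsConj (lowerUnipotent ε) B}, t = (A * B).val.trace} =
      (fun s => 2 * cos θ - ε * sin θ * s) '' Set.Ioi 0 := by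
  rw [C3_eq_setOf_isConj, setOf_apply_mul_of_isConj_eq_range (fun A : SL2R => A.val.trace)
    Matrix.SpecialLinearGroup.trace_conj, ← range_sq_add_sq_col_one, ← Set.range_comp]
  exact congrArg Set.range (funext (trace_rotSL_mul_conj_lowerUnipotent θ ε))

theorem trace_range_C3_mul_C2 (α : ℝ) (hα : α ∈ Set.Ioo 0 π) :
    {t : ℝ | ∃ A ∈ C3 α, ∃ B ∈ C2pp, t = (A * B).val.trace} =
      Set.Iio (2 * Real.cos α) ∧
    {t : ℝ | ∃ A ∈ C3 α, ∃ B ∈ C2pm, t = (A * B).val.trace} =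
      Set.Ioi (2 * Real.cos α) := by
  have hsin : 0 < sin α := sin_pos_of_pos_of_lt_pi hα.1 hα.2
  rw [C2pp_eq_setOf_isConj, C2pm_eq_setOf_isConj, trace_C3_mul_conj_lowerUnipotent,
    trace_C3_mul_conj_lowerUnipotent]
  exact ⟨image_const_sub_mul_Ioi_zero_of_pos (by linarith),
    image_const_sub_mul_Ioi_zero_of_neg (by linarith)⟩
end

section
/- Let 0 < α, β, γ, δ < π with α + β + γ + δ ≤ π. Then the quadruple product C₃^α · C₃^β · C₃^γ · C₃^δ in SL₂(ℝ) equals all of SL₂(ℝ); in particular -I is a product of four elliptic elements with rotation angles α, β, γ, δ. -/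
open Matrix Real

/-!
Every conjugacy class involved is invariant under conjugation, hence so is each product of two
of them. An element of trace `< -2` is conjugate to `diag(μ, μ⁻¹)` with `μ < -1`, and that
diagonal matrix is `C * (C⁻¹ * diag(μ, μ⁻¹))` where `C` is a shear conjugate of `R(θ₁)` with the
shear chosen so that the second factor has trace `2 cos θ₂`; by the criterion "trace `2 cos θ`
and positive lower-left entry" it then lies in `C₃^θ₂`. So `C₃^α C₃^β` and `C₃^γ C₃^δ` both
contain every element of trace `< -2`, and every `X ≠ -1` is a product of two such elements.
Finally `-1 = R(α) R(β) R(π - α - β)`, and the same shear construction splits `R(φ)` into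
`C₃^γ C₃^δ` as soon as `γ + δ ≤ φ < π`, which for `φ = π - α - β` is the angle condition.
-/

open scoped Pointwise

local notation:1024 "↑ₘ" A:1024 => ((A : SL2R) : Matrix (Fin 2) (Fin 2) ℝ)

theorem conj_mem_mul_of_conj_mem {G : Type*} [Group G] {S T : Set G}
    (hS : ∀ g, ∀ x ∈ S, g * x * g⁻¹ ∈ S) (hT : ∀ g, ∀ x ∈ T, g * x * g⁻¹ ∈ T)
    (g : G) {x : G} (hx : x ∈ S * T) : g * x * g⁻¹ ∈ S * T := by
  obtain ⟨y, hy, z, hz, rfl⟩ := hx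
  exact ⟨_, hS g y hy, _, hT g z hz, by group⟩

def mkSL2 (a b c d : ℝ) (h : a * d - b * c = 1) : SL2R :=
  ⟨!![a, b; c, d], by rwa [det_fin_two_of]⟩

@[simp]
theorem coe_mkSL2 (a b c d : ℝ) (h : a * d - b * c = 1) :
    ↑ₘ(mkSL2 a b c d h) = !![a, b; c, d] :=
  rfl

namespace SL2R

theorem det_eq_one (M : SL2R) : M 0 0 * M 1 1 - M 0 1 * M 1 0 = 1 :=
  (det_fin_two _).symm.trans M.2

theorem trace_conj (g M : SL2R) : trace ↑ₘ(g * M * g⁻¹) = trace ↑ₘM := by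
  rw [Matrix.SpecialLinearGroup.coe_mul, trace_mul_comm, ← Matrix.SpecialLinearGroup.coe_mul,
    inv_mul_cancel_left]

theorem trace_inv_mul (C M : SL2R) :
    trace ↑ₘ(C⁻¹ * M) = C 1 1 * M 0 0 - C 0 1 * M 1 0 - C 1 0 * M 0 1 + C 0 0 * M 1 1 := by
  simp only [Matrix.SpecialLinearGroup.coe_mul, Matrix.SpecialLinearGroup.coe_inv, adjugate_fin_two,
    trace_fin_two, mul_apply, Fin.sum_univ_two, of_apply, cons_val', cons_val_zero, cons_val_one,
    empty_val', cons_val_fin_one]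
  ring

theorem inv_mul_apply_one_zero (C M : SL2R) :
    (C⁻¹ * M) 1 0 = C 0 0 * M 1 0 - C 1 0 * M 0 0 := by
  simp only [Matrix.SpecialLinearGroup.coe_mul, Matrix.SpecialLinearGroup.coe_inv, adjugate_fin_two,
    mul_apply, Fin.sum_univ_two, of_apply, cons_val', cons_val_zero, cons_val_one, empty_val',
    cons_val_fin_one]
  ring

theorem eq_one_or_eq_neg_one_of_coe_eq {X : SL2R} {a : ℝ} (h : ↑ₘX = !![a, 0; 0, a]) :
    X = 1 ∨ X = -1 := by
  have ha : a * a = 1 := by simpa [h] using det_eq_one X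
  rcases mul_self_eq_one_iff.1 ha with rfl | rfl
  · left; ext i j; fin_cases i <;> fin_cases j <;> simp [h]
  · right; ext i j; fin_cases i <;> fin_cases j <;> simp [h]

theorem exists_conj_apply_one_zero_ne_zero {X : SL2R} (h1 : X ≠ 1) (h2 : X ≠ -1) :
    ∃ g : SL2R, (g * X * g⁻¹) 1 0 ≠ 0 := by
  by_contra! h
  -- conjugating by the shear `!![1, 0; t, 1]` gives lower-left entry `c + t (a - d) - t² b`
  have shear (t : ℝ) : X 1 0 + t * (X 0 0 - X 1 1) - t ^ 2 * X 0 1 = 0 := by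
    have := h (mkSL2 1 0 t 1 (by ring))
    simp only [Matrix.SpecialLinearGroup.coe_mul, Matrix.SpecialLinearGroup.coe_inv,
      adjugate_fin_two, coe_mkSL2, mul_apply, Fin.sum_univ_two, of_apply, cons_val', cons_val_zero,
      cons_val_one, cons_val_fin_one, empty_val'] at this
    linear_combination this
  have ht₀ := shear 0
  have ht₁ := shear 1
  have ht₂ := shear (-1)
  have hX : ↑ₘX = !![X 0 0, 0; 0, X 0 0] := by
    ext i j
    fin_cases i <;> fin_cases j <;> simp <;> linarith
  exact (eq_one_or_eq_neg_one_of_coe_eq hX).elim h1 h2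

end SL2R

noncomputable def RotSL (θ : ℝ) : SL2R :=
  ⟨Rot θ, by rw [Rot, det_fin_two_of]; linear_combination sin_sq_add_cos_sq θ⟩

@[simp]
theorem coe_RotSL (θ : ℝ) : ↑ₘ(RotSL θ) = Rot θ :=
  rfl

theorem RotSL_add (x y : ℝ) : RotSL (x + y) = RotSL x * RotSL y := by
  ext i j
  fin_cases i <;> fin_cases j <;>
    simp only [Matrix.SpecialLinearGroup.coe_mul, coe_RotSL, Rot, mul_apply, Fin.sum_univ_two,
      cos_add, sin_add, Fin.zero_eta, Fin.mk_one, of_apply, cons_val', cons_val_zero, cons_val_one,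
      cons_val_fin_one, empty_val'] <;>
    ring

theorem RotSL_pi : RotSL π = -1 := by
  ext i j
  fin_cases i <;> fin_cases j <;> simp [Rot]

theorem mem_C3_iff {θ : ℝ} {A : SL2R} : A ∈ C3 θ ↔ ∃ g, g * RotSL θ * g⁻¹ = A :=
  exists_congr fun g => ⟨fun h => Subtype.ext (by simp [h]), fun h => by simp [← h]⟩

theorem RotSL_mem_C3 (θ : ℝ) : RotSL θ ∈ C3 θ :=
  mem_C3_iff.2 ⟨1, by group⟩

theorem conj_mem_C3 {θ : ℝ} (g : SL2R) {A : SL2R} (hA : A ∈ C3 θ) : g * A * g⁻¹ ∈ C3 θ := by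
  obtain ⟨k, rfl⟩ := mem_C3_iff.1 hA
  exact mem_C3_iff.2 ⟨g * k, by group⟩

theorem conj_mem_C3_mul_C3 {θ₁ θ₂ : ℝ} (g : SL2R) {M : SL2R} (hM : M ∈ C3 θ₁ * C3 θ₂) :
    g * M * g⁻¹ ∈ C3 θ₁ * C3 θ₂ :=
  conj_mem_mul_of_conj_mem (fun g _ => conj_mem_C3 g) (fun g _ => conj_mem_C3 g) g hM

/-- The sign condition separates `C3 θ` from the class of `R(-θ)`, which has the same trace. -/
theorem mem_C3_of_trace_eq {θ : ℝ} (hθ : θ ∈ Set.Ioo 0 π) {M : SL2R}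
    (htr : trace ↑ₘM = 2 * cos θ) (hM : 0 < M 1 0) : M ∈ C3 θ := by
  have hs : 0 < sin θ := sin_pos_of_pos_of_lt_pi hθ.1 hθ.2
  obtain ⟨u, hu, hu2⟩ : ∃ u : ℝ, 0 < u ∧ M 1 0 * u ^ 2 = sin θ :=
    ⟨√(sin θ / M 1 0), by positivity, by rw [sq_sqrt (by positivity)]; field_simp⟩
  rw [trace_fin_two] at htr
  have hdet := SL2R.det_eq_one M
  refine mem_C3_iff.2 ⟨mkSL2 u (u * (M 0 0 - cos θ) / sin θ) 0 u⁻¹ (by simp [hu.ne']), ?_⟩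
  rw [mul_inv_eq_iff_eq_mul]
  ext i j
  fin_cases i <;> fin_cases j <;>
    simp only [Matrix.SpecialLinearGroup.coe_mul, coe_mkSL2, coe_RotSL, Rot, mul_apply,
      Fin.sum_univ_two, Fin.zero_eta, Fin.mk_one, of_apply, cons_val', cons_val_zero, cons_val_one,
      cons_val_fin_one, empty_val'] <;>
    field_simp
  · ring
  · refine mul_left_cancel₀ hM.ne' ?_
    linear_combination (-sin θ ^ 2 - (M 0 0 - cos θ) ^ 2) * hu2 + sin θ * hdet
      - sin θ * M 0 0 * htr - sin θ * sin_sq_add_cos_sq θ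
  · linear_combination -hu2
  · linear_combination -(M 0 0 - cos θ) * hu2 - sin θ * htr

theorem mem_C3_mul_C3_of_inv_mul {θ₁ θ₂ : ℝ} (hθ₂ : θ₂ ∈ Set.Ioo 0 π) {C M : SL2R}
    (hC : C ∈ C3 θ₁) (htr : trace ↑ₘ(C⁻¹ * M) = 2 * cos θ₂) (hpos : 0 < (C⁻¹ * M) 1 0) :
    M ∈ C3 θ₁ * C3 θ₂ :=
  ⟨C, hC, C⁻¹ * M, mem_C3_of_trace_eq hθ₂ htr hpos, mul_inv_cancel_left C M⟩

/-- The conjugate `!![1, x; 0, 1] * R(θ) * !![1, -x; 0, 1]` of the rotation by a shear. -/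
noncomputable def shearRot (θ x : ℝ) : SL2R :=
  mkSL2 (cos θ + x * sin θ) (-(sin θ * (1 + x ^ 2))) (sin θ) (cos θ - x * sin θ)
    (by linear_combination sin_sq_add_cos_sq θ)

theorem shearRot_mem_C3 {θ : ℝ} (hθ : θ ∈ Set.Ioo 0 π) (x : ℝ) : shearRot θ x ∈ C3 θ :=
  mem_C3_of_trace_eq hθ (by simp only [shearRot, coe_mkSL2, trace_fin_two, of_apply, cons_val',
    cons_val_zero, cons_val_one, cons_val_fin_one, empty_val']; ring)
    (by simpa [shearRot] using sin_pos_of_pos_of_lt_pi hθ.1 hθ.2)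

theorem diag2_mem_C3_mul_C3 {θ₁ θ₂ : ℝ} (hθ₁ : θ₁ ∈ Set.Ioo 0 π) (hθ₂ : θ₂ ∈ Set.Ioo 0 π)
    {μ : ℝ} (hμ : μ < -1) (hμ₀ : μ ≠ 0) :
    SpecialLinearGroup.diag2 μ hμ₀ ∈ C3 θ₁ * C3 θ₂ := by
  have hs : 0 < sin θ₁ := sin_pos_of_pos_of_lt_pi hθ₁.1 hθ₁.2
  -- the trace of the second factor is affine in the shear parameter, with slope `sin θ₁ (μ⁻¹ - μ)`
  refine mem_C3_mul_C3_of_inv_mul hθ₂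
    (shearRot_mem_C3 hθ₁ ((2 * cos θ₂ - cos θ₁ * (μ + μ⁻¹)) / (sin θ₁ * (μ⁻¹ - μ)))) ?_ ?_
  · rw [SL2R.trace_inv_mul]
    simp only [shearRot, coe_mkSL2, SpecialLinearGroup.diag2_coe', of_apply, cons_val',
      cons_val_zero, cons_val_one, cons_val_fin_one, empty_val']
    have : 1 - μ ^ 2 ≠ 0 := by nlinarith
    field_simp
    ring
  · rw [SL2R.inv_mul_apply_one_zero]
    simp only [shearRot, coe_mkSL2, SpecialLinearGroup.diag2_coe', of_apply, cons_val',
      cons_val_zero, cons_val_one, cons_val_fin_one, empty_val']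
    nlinarith

theorem RotSL_mem_C3_mul_C3 {θ₁ θ₂ φ : ℝ} (hθ₁ : θ₁ ∈ Set.Ioo 0 π) (hθ₂ : θ₂ ∈ Set.Ioo 0 π)
    (hφ : φ < π) (hle : θ₁ + θ₂ ≤ φ) : RotSL φ ∈ C3 θ₁ * C3 θ₂ := by
  have hs₁ : 0 < sin θ₁ := sin_pos_of_pos_of_lt_pi hθ₁.1 hθ₁.2
  have hsφ : 0 < sin φ := sin_pos_of_pos_of_lt_pi (by linarith [hθ₁.1, hθ₂.1]) hφ
  have hsub : 0 < sin (φ - θ₁) :=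
    sin_pos_of_pos_of_lt_pi (by linarith [hθ₂.1]) (by linarith [hθ₁.1])
  have hcos : cos (φ - θ₁) ≤ cos θ₂ :=
    cos_le_cos_of_nonneg_of_le_pi hθ₂.1.le (by linarith [hθ₁.1]) (by linarith)
  -- the trace of the second factor is `2 cos (φ - θ₁) + x² sin θ₁ sin φ`
  obtain ⟨x, hx, hx2⟩ : ∃ x : ℝ, 0 ≤ x ∧ x ^ 2 * (sin θ₁ * sin φ) = 2 * (cos θ₂ - cos (φ - θ₁)) :=
    ⟨√(2 * (cos θ₂ - cos (φ - θ₁)) / (sin θ₁ * sin φ)), sqrt_nonneg _, by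
      rw [sq_sqrt (div_nonneg (by linarith) (by positivity))]; field_simp⟩
  refine mem_C3_mul_C3_of_inv_mul hθ₂ (shearRot_mem_C3 hθ₁ x) ?_ ?_
  · rw [SL2R.trace_inv_mul]
    simp only [shearRot, coe_mkSL2, coe_RotSL, Rot, of_apply, cons_val', cons_val_zero,
      cons_val_one, cons_val_fin_one, empty_val']
    rw [cos_sub] at hx2
    linear_combination hx2
  · rw [SL2R.inv_mul_apply_one_zero]
    simp only [shearRot, coe_mkSL2, coe_RotSL, Rot, of_apply, cons_val', cons_val_zero,
      cons_val_one, cons_val_fin_one, empty_val']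
    rw [sin_sub] at hsub
    nlinarith [mul_pos hs₁ hsφ]

theorem exists_conj_diag2_eq {M : SL2R} (hM : M 1 0 ≠ 0) {μ : ℝ} (hμ₀ : μ ≠ 0)
    (hμ : μ ^ 2 - trace ↑ₘM * μ + 1 = 0) (hμ1 : μ ^ 2 ≠ 1) :
    ∃ P : SL2R, P * SpecialLinearGroup.diag2 μ hμ₀ * P⁻¹ = M := by
  have hΔ : μ - μ⁻¹ ≠ 0 := by
    rw [sub_ne_zero]; intro h; apply hμ1; field_simp at h; linarith
  rw [trace_fin_two] at hμ
  have hdet := SL2R.det_eq_one M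
  -- the columns of `P` are eigenvectors of `M` for `μ` and `μ⁻¹`, normalised to `det P = 1`
  refine ⟨mkSL2 ((μ - M 1 1) / (M 1 0 * (μ - μ⁻¹))) (μ⁻¹ - M 1 1) (1 / (μ - μ⁻¹)) (M 1 0)
    (by field_simp; ring), ?_⟩
  rw [mul_inv_eq_iff_eq_mul]
  ext i j
  fin_cases i <;> fin_cases j <;>
    simp only [Matrix.SpecialLinearGroup.coe_mul, coe_mkSL2, SpecialLinearGroup.diag2_coe',
      mul_apply, Fin.sum_univ_two, mul_zero, add_zero, zero_add, Fin.zero_eta, Fin.mk_one, of_apply,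
      cons_val', cons_val_zero, cons_val_one, cons_val_fin_one, empty_val'] <;>
    field_simp
  · linear_combination hμ + hdet
  · linear_combination hμ + μ ^ 2 * hdet
  · ring
  · ring

def negHyperbolic : Set SL2R :=
  {Y | trace ↑ₘY < -2}

theorem conj_mem_negHyperbolic (g : SL2R) {Y : SL2R} (hY : Y ∈ negHyperbolic) :
    g * Y * g⁻¹ ∈ negHyperbolic :=
  (SL2R.trace_conj g Y).trans_lt hY

theorem negHyperbolic_subset_C3_mul_C3 {θ₁ θ₂ : ℝ} (hθ₁ : θ₁ ∈ Set.Ioo 0 π)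
    (hθ₂ : θ₂ ∈ Set.Ioo 0 π) : negHyperbolic ⊆ C3 θ₁ * C3 θ₂ := by
  intro M (hM : trace ↑ₘM < -2)
  obtain ⟨g, hg⟩ := SL2R.exists_conj_apply_one_zero_ne_zero (X := M)
    (by rintro rfl; norm_num [trace_fin_two] at hM) (by rintro rfl; norm_num [trace_fin_two] at hM)
  obtain ⟨μ, hμ, hroot⟩ : ∃ μ < -1, μ ^ 2 - trace ↑ₘM * μ + 1 = 0 := by
    have hsq : √(trace ↑ₘM ^ 2 - 4) ^ 2 = trace ↑ₘM ^ 2 - 4 := sq_sqrt (by nlinarith)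
    exact ⟨(trace ↑ₘM - √(trace ↑ₘM ^ 2 - 4)) / 2, by linarith [sqrt_nonneg (trace ↑ₘM ^ 2 - 4)],
      by linear_combination hsq / 4⟩
  obtain ⟨P, hP⟩ := exists_conj_diag2_eq hg (by linarith) (by rwa [SL2R.trace_conj]) (by nlinarith)
  have := conj_mem_C3_mul_C3 (g⁻¹ * P) (diag2_mem_C3_mul_C3 hθ₁ hθ₂ hμ (by linarith))
  convert this using 1
  calc M = g⁻¹ * (g * M * g⁻¹) * g := by group
    _ = _ := by rw [← hP]; group

theorem mem_negHyperbolic_mul_of_apply_one_zero_ne_zero {X : SL2R} (hX : X 1 0 ≠ 0) :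
    X ∈ negHyperbolic * negHyperbolic := by
  -- the upper-right entry of the first factor is chosen so that the second one has trace `-3`
  refine ⟨mkSL2 (-2) ((3 - X 0 0 / 2 - 2 * X 1 1) / X 1 0) 0 (-1 / 2) (by norm_num), ?_, _, ?_,
    mul_inv_cancel_left _ X⟩
  · show trace ↑ₘ(_) < -2
    norm_num [trace_fin_two]
  · show trace ↑ₘ(_) < -2
    rw [SL2R.trace_inv_mul]
    simp only [coe_mkSL2, of_apply, cons_val', cons_val_zero, cons_val_one, cons_val_fin_one,
      empty_val']
    field_simp
    linarith

theorem mem_negHyperbolic_mul_negHyperbolic {X : SL2R} (hX : X ≠ -1) :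
    X ∈ negHyperbolic * negHyperbolic := by
  by_cases h1 : X = 1
  · let Y := mkSL2 (-2) 0 0 (-1 / 2) (by norm_num)
    refine ⟨Y, ?_, Y⁻¹, ?_, h1 ▸ mul_inv_cancel Y⟩
    · show trace ↑ₘ(_) < -2
      norm_num [Y, trace_fin_two]
    · show trace ↑ₘ(_) < -2
      rw [← mul_one Y⁻¹, SL2R.trace_inv_mul]
      norm_num [Y]
  obtain ⟨g, hg⟩ := SL2R.exists_conj_apply_one_zero_ne_zero h1 hX
  convert conj_mem_mul_of_conj_mem (fun g _ => conj_mem_negHyperbolic g)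
    (fun g _ => conj_mem_negHyperbolic g) g⁻¹ (mem_negHyperbolic_mul_of_apply_one_zero_ne_zero hg)
    using 1
  group

theorem C3_mul_C3_mul_C3_mul_C3 {α β γ δ : ℝ} (hα : α ∈ Set.Ioo 0 π) (hβ : β ∈ Set.Ioo 0 π)
    (hγ : γ ∈ Set.Ioo 0 π) (hδ : δ ∈ Set.Ioo 0 π) (hsum : α + β + γ + δ ≤ π) :
    C3 α * C3 β * C3 γ * C3 δ = Set.univ := by
  refine Set.eq_univ_of_forall fun X => ?_
  rw [mul_assoc]
  by_cases hX : X = -1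
  · rw [hX, ← RotSL_pi, show π = α + β + (π - α - β) by ring, RotSL_add, RotSL_add]
    exact Set.mul_mem_mul (Set.mul_mem_mul (RotSL_mem_C3 α) (RotSL_mem_C3 β))
      (RotSL_mem_C3_mul_C3 hγ hδ (by linarith [hα.1, hβ.1]) (by linarith))
  · exact Set.mul_subset_mul (negHyperbolic_subset_C3_mul_C3 hα hβ)
      (negHyperbolic_subset_C3_mul_C3 hγ hδ) (mem_negHyperbolic_mul_negHyperbolic hX)

theorem quadruple_product_C3_small (α β γ δ : ℝ)
    (hα : α ∈ Set.Ioo 0 π) (hβ : β ∈ Set.Ioo 0 π)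
    (hγ : γ ∈ Set.Ioo 0 π) (hδ : δ ∈ Set.Ioo 0 π)
    (hsum : α + β + γ + δ ≤ π) :
    {X : SL2R | ∃ A ∈ C3 α, ∃ B ∈ C3 β, ∃ C ∈ C3 γ, ∃ D ∈ C3 δ, X = A * B * C * D} =
      Set.univ ∧
    (∃ A ∈ C3 α, ∃ B ∈ C3 β, ∃ C ∈ C3 γ, ∃ D ∈ C3 δ, A * B * C * D = -1) := by
  have hprod (X : SL2R) : ∃ A ∈ C3 α, ∃ B ∈ C3 β, ∃ C ∈ C3 γ, ∃ D ∈ C3 δ, A * B * C * D = X := by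
    have hX : X ∈ C3 α * C3 β * C3 γ * C3 δ := by
      rw [C3_mul_C3_mul_C3_mul_C3 hα hβ hγ hδ hsum]; trivial
    obtain ⟨_, ⟨_, ⟨A, hA, B, hB, rfl⟩, C, hC, rfl⟩, D, hD, rfl⟩ := hX
    exact ⟨A, hA, B, hB, C, hC, D, hD, rfl⟩
  refine ⟨Set.eq_univ_of_forall fun X => ?_, hprod (-1)⟩
  obtain ⟨A, hA, B, hB, C, hC, D, hD, h⟩ := hprod X
  exact ⟨A, hA, B, hB, C, hC, D, hD, h.symm⟩
end

section
/- In PSL₂(ℝ), the product of any four non-trivial conjugacy classes is the whole group PSL₂(ℝ); consequently the covering number and extended covering number of PSL₂(ℝ) both equal 4. -/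
/-!
Write `|tr|` for the absolute value of the trace, which is well defined on PSL₂(ℝ).

Lower bound: for `S = !![0, -1; 1, 0]` and any `M ∈ SL₂(ℝ)`, `tr (S * M S M⁻¹)` is minus the sum
of the squares of the entries of `M`, hence at most `-2`. So a product of two conjugates of `S` has
`|tr| ≥ 2`, whereas a conjugate of `S⁻¹` has trace `0`: three conjugates of `S` never multiply
to `1`.

Upper bound: after conjugating non-central `A` and `B` so that their lower-left entries are nonzero,
`tr (A * U B U⁻¹)` with `U = !![1, m; 0, 1]` is a quadratic polynomial in `m` with leading
coefficient `-A₁₀ B₁₀ ≠ 0`, so `|tr|` takes every large value on `C(A) C(B)`. Elements with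
`|tr| > 2` are diagonalisable over ℝ, so in PSL₂(ℝ) they are conjugate as soon as their `|tr|`
agree; hence `C(a) C(b)` contains every element of large `|tr|`. Finally, every element of PSL₂(ℝ)
is a product `y z` with `|tr y|` and `|tr z|` as large as we like.
-/

open Matrix

/-- PSL₂(ℝ) = SL₂(ℝ)/{±I} (the center of SL₂(ℝ) is {±I}). -/
abbrev PSL2R := Matrix.SpecialLinearGroup (Fin 2) ℝ ⧸
  Subgroup.center (Matrix.SpecialLinearGroup (Fin 2) ℝ)

/-- "C^n = G for every non-trivial conjugacy class C". -/
def CoverProp (G : Type*) [Group G] (n : ℕ) : Prop :=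
  ∀ g : G, g ≠ 1 → ∀ x : G,
    ∃ f : Fin n → G, (∀ i, IsConj g (f i)) ∧ (List.ofFn f).prod = x

/-- "the product of any n non-trivial conjugacy classes is G". -/
def ExtCoverProp (G : Type*) [Group G] (n : ℕ) : Prop :=
  ∀ g : Fin n → G, (∀ i, g i ≠ 1) → ∀ x : G,
    ∃ f : Fin n → G, (∀ i, IsConj (g i) (f i)) ∧ (List.ofFn f).prod = x

open scoped MatrixGroups

theorem CoverProp.succ {G : Type*} [Group G] {n : ℕ} (h : CoverProp G n) :
    CoverProp G (n + 1) := by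
  intro g hg x
  obtain ⟨f, hf, hprod⟩ := h g hg (g⁻¹ * x)
  refine ⟨Fin.cons g f, Fin.cases (IsConj.refl g) hf, ?_⟩
  rw [List.ofFn_succ, List.prod_cons]
  simp [hprod]

theorem CoverProp.mono {G : Type*} [Group G] {m n : ℕ} (hmn : m ≤ n) (h : CoverProp G m) :
    CoverProp G n := by
  induction n, hmn using Nat.le_induction with
  | base => exact h
  | succ n _ ih => exact ih.succ

theorem ExtCoverProp.coverProp {G : Type*} [Group G] {n : ℕ} (h : ExtCoverProp G n) :
    CoverProp G n :=
  fun g hg x => h (fun _ => g) (fun _ => hg) x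

theorem exists_isConj_mul_eq_of_isConj_mul {G : Type*} [Group G] {g₁ g₂ a₁ a₂ y : G}
    (h₁ : IsConj g₁ a₁) (h₂ : IsConj g₂ a₂) (h : IsConj (a₁ * a₂) y) :
    ∃ b₁ b₂, IsConj g₁ b₁ ∧ IsConj g₂ b₂ ∧ b₁ * b₂ = y := by
  obtain ⟨c, rfl⟩ := isConj_iff.mp h
  exact ⟨c * a₁ * c⁻¹, c * a₂ * c⁻¹, h₁.trans (isConj_iff.mpr ⟨c, rfl⟩),
    h₂.trans (isConj_iff.mpr ⟨c, rfl⟩), by group⟩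

theorem MonoidHom.exists_isConj_map_eq {G H : Type*} [Group G] [Group H] {f : G →* H}
    (hf : Function.Surjective f) {g : G} {h : H} (hgh : IsConj (f g) h) :
    ∃ g', IsConj g g' ∧ f g' = h := by
  obtain ⟨c, rfl⟩ := isConj_iff.mp hgh
  obtain ⟨c, rfl⟩ := hf c
  exact ⟨c * g * c⁻¹, isConj_iff.mpr ⟨c, rfl⟩, by simp⟩

theorem exists_quadratic_eq_of_le {a b c T : ℝ} (ha : 0 < a) (hT : c ≤ T) :
    ∃ x, a * x ^ 2 + b * x + c = T := by
  have hdisc : 0 ≤ discrim a b (c - T) := by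
    rw [discrim]; nlinarith [sq_nonneg b]
  obtain ⟨x, hx⟩ := exists_quadratic_eq_zero ha.ne'
    ⟨√(discrim a b (c - T)), (Real.mul_self_sqrt hdisc).symm⟩
  exact ⟨x, by linear_combination hx⟩

theorem exists_abs_quadratic_eq {a : ℝ} (ha : a ≠ 0) (b c : ℝ) :
    ∃ N, ∀ T, N ≤ T → ∃ x, |a * x ^ 2 + b * x + c| = T := by
  rcases ha.lt_or_gt with ha | ha
  · refine ⟨max (-c) 0, fun T hT => ?_⟩
    obtain ⟨x, hx⟩ := exists_quadratic_eq_of_le (b := -b) (neg_pos.mpr ha) (le_of_max_le_left hT)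
    have hx' : -(a * x ^ 2 + b * x + c) = T := by linear_combination hx
    exact ⟨x, by rw [← abs_neg, hx', abs_of_nonneg (le_of_max_le_right hT)]⟩
  · refine ⟨max c 0, fun T hT => ?_⟩
    obtain ⟨x, hx⟩ := exists_quadratic_eq_of_le (b := b) ha (le_of_max_le_left hT)
    exact ⟨x, by rw [hx, abs_of_nonneg (le_of_max_le_right hT)]⟩

theorem exists_add_inv_eq_of_two_lt_abs {τ : ℝ} (hτ : 2 < |τ|) :
    ∃ l : ℝ, l ≠ 0 ∧ l ≠ l⁻¹ ∧ l + l⁻¹ = τ := by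
  have hdisc : 0 ≤ discrim 1 (-τ) 1 := by
    rw [discrim]; nlinarith [sq_abs τ, abs_nonneg τ]
  obtain ⟨l, hl⟩ := exists_quadratic_eq_zero one_ne_zero
    ⟨√(discrim 1 (-τ) 1), (Real.mul_self_sqrt hdisc).symm⟩
  have hl0 : l ≠ 0 := by rintro rfl; simp at hl
  have hsum : l + l⁻¹ = τ := by field_simp; linear_combination hl
  refine ⟨l, hl0, fun hll => ?_, hsum⟩
  have hsq : l * l = 1 := by nth_rewrite 2 [hll]; exact mul_inv_cancel₀ hl0
  rw [← hll] at hsum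
  rcases mul_self_eq_one_iff.mp hsq with rfl | rfl <;> subst hsum <;> norm_num at hτ

theorem mul_abs_le_abs_inv_mul_add_mul {p s l : ℝ} (hps : p * s = 1) (hl : 0 < l) :
    l * |s| ≤ |l⁻¹ * p + l * s| := by
  have hs : 0 < |s| := abs_pos.mpr (right_ne_zero_of_mul_eq_one hps)
  refine le_of_mul_le_mul_left ?_ hs
  calc |s| * (l * |s|) = l * s ^ 2 := by rw [← sq_abs s]; ring
    _ ≤ l⁻¹ + l * s ^ 2 := by linarith [inv_pos.mpr hl]
    _ ≤ |l⁻¹ + l * s ^ 2| := le_abs_self _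
    _ = |s| * |l⁻¹ * p + l * s| := by
      rw [← abs_mul]; congr 1; linear_combination (-l⁻¹) * hps

namespace Matrix

theorem trace_mul_conj_upper_unitriangular {R : Type*} [CommRing R]
    (A B : Matrix (Fin 2) (Fin 2) R) (m : R) :
    trace (A * (!![1, m; 0, 1] * B * !![1, -m; 0, 1])) =
      -(A 1 0 * B 1 0) * m ^ 2 + (A 0 0 * B 1 0 - A 1 1 * B 1 0 + A 1 0 * (B 1 1 - B 0 0)) * m +
        trace (A * B) := by
  simp only [trace_fin_two, mul_apply, Fin.sum_univ_two, of_apply, cons_val_zero, cons_val_one]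
  ring

namespace SpecialLinearGroup

section CommRing

variable {R : Type*} [CommRing R]

theorem det_fin_two_apply (A : SL(2, R)) : A.1 0 0 * A.1 1 1 - A.1 0 1 * A.1 1 0 = 1 := by
  rw [← det_fin_two]; exact A.det_coe

theorem trace_conj_s19 {n : Type*} [Fintype n] [DecidableEq n] (P A : SpecialLinearGroup n R) :
    trace (P * A * P⁻¹).1 = trace A.1 := by
  rw [coe_mul, trace_mul_comm, ← coe_mul, inv_mul_cancel_left]

theorem trace_eq_of_isConj {n : Type*} [Fintype n] [DecidableEq n]
    {A B : SpecialLinearGroup n R} (h : IsConj A B) : trace A.1 = trace B.1 := by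
  obtain ⟨P, rfl⟩ := isConj_iff.mp h
  exact (trace_conj_s19 P A).symm

theorem trace_inv_fin_two (A : SL(2, R)) : trace A⁻¹.1 = trace A.1 := by
  rw [coe_inv, adjugate_fin_two, trace_fin_two_of, trace_fin_two, add_comm]

theorem coe_S_cast : ((ModularGroup.S : SL(2, R)) : Matrix (Fin 2) (Fin 2) R) = !![0, -1; 1, 0] := by
  ext i j; fin_cases i <;> fin_cases j <;> simp [ModularGroup.coe_S]

theorem exists_isConj_apply_one_zero_ne_zero {A : SL(2, R)}
    (hA : A ∉ Subgroup.center SL(2, R)) : ∃ B : SL(2, R), IsConj A B ∧ B.1 1 0 ≠ 0 := by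
  by_cases hc : A.1 1 0 ≠ 0
  · exact ⟨A, IsConj.refl A, hc⟩
  by_cases hb : A.1 0 1 ≠ 0
  · let P : SL(2, R) := ⟨!![0, -1; 1, 0], by simp [det_fin_two_of]⟩
    refine ⟨P * A * P⁻¹, isConj_iff.mpr ⟨P, rfl⟩, ?_⟩
    rw [coe_mul, coe_mul, coe_inv, eta_fin_two A.1]
    simpa [P, adjugate_fin_two] using hb
  push Not at hb hc
  have had : A.1 0 0 - A.1 1 1 ≠ 0 := by
    intro had
    refine hA (mem_center_iff.mpr ⟨A.1 0 0, ?_, ?_⟩)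
    · simpa [hb, hc, ← sub_eq_zero.mp had, sq] using det_fin_two_apply A
    · ext i j
      fin_cases i <;> fin_cases j <;> simp [hb, hc, sub_eq_zero.mp had]
  let P : SL(2, R) := ⟨!![1, 0; 1, 1], by simp [det_fin_two_of]⟩
  refine ⟨P * A * P⁻¹, isConj_iff.mpr ⟨P, rfl⟩, ?_⟩
  rw [coe_mul, coe_mul, coe_inv, eta_fin_two A.1]
  simpa [P, adjugate_fin_two, hb, hc, ← sub_eq_add_neg] using had

theorem abs_trace_mul_of_mem_center [LinearOrder R] [IsStrictOrderedRing R] {Z : SL(2, R)}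
    (hZ : Z ∈ Subgroup.center SL(2, R)) (A : SL(2, R)) : |trace (A * Z).1| = |trace A.1| := by
  obtain ⟨r, hr, hZ⟩ := mem_center_iff.mp hZ
  have hr1 : |r| = 1 := by
    rw [Fintype.card_fin] at hr
    exact (pow_eq_one_iff_of_nonneg (abs_nonneg r) two_ne_zero).mp (by rw [pow_abs, hr, abs_one])
  have htr : trace (A * Z).1 = r * trace A.1 := by
    rw [coe_mul, ← hZ]
    simp [trace_fin_two, mul_comm, mul_add]
  rw [htr, abs_mul, hr1, one_mul]

end CommRing

section Field

variable {K : Type*} [Field K]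

theorem notMem_center_of_trace_eq {A : SL(2, K)} {l : K} (hll : l ≠ l⁻¹)
    (htr : trace A.1 = l + l⁻¹) : A ∉ Subgroup.center SL(2, K) := by
  intro hA
  obtain ⟨r, hr, hrA⟩ := mem_center_iff.mp hA
  rw [Fintype.card_fin] at hr
  have hl : l ≠ 0 := by rintro rfl; simp at hll
  have hrl : 2 * r = l + l⁻¹ := by
    rw [← htr, ← hrA]; simp
  have : (l - r) ^ 2 = 0 := by
    field_simp at hrl
    linear_combination -hrl + hr
  have hlr : l = r := sub_eq_zero.mp (pow_eq_zero_iff two_ne_zero |>.mp this)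
  apply hll
  rw [hlr, inv_eq_of_mul_eq_one_right (by rw [← sq, hr])]

theorem isConj_diag2 {A : SL(2, K)} (hc : A.1 1 0 ≠ 0) {l : K} (hl : l ≠ 0) (hll : l ≠ l⁻¹)
    (htr : trace A.1 = l + l⁻¹) : IsConj (diag2 l hl) A := by
  have hdet := det_fin_two_apply A
  rw [trace_fin_two] at htr
  have hroot : l ^ 2 - (A.1 0 0 + A.1 1 1) * l + 1 = 0 := by
    rw [htr]; field_simp; ring
  have hroot' : l⁻¹ ^ 2 - (A.1 0 0 + A.1 1 1) * l⁻¹ + 1 = 0 := by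
    rw [htr]; field_simp; ring
  have hx : A.1 1 0 * (l - l⁻¹) ≠ 0 := mul_ne_zero hc (sub_ne_zero.mpr hll)
  set x := (A.1 1 0 * (l - l⁻¹))⁻¹
  -- the columns of `Q` are eigenvectors of `A` for `l` and `l⁻¹`
  let Q : SL(2, K) := ⟨!![x * (l - A.1 1 1), l⁻¹ - A.1 1 1; x * A.1 1 0, A.1 1 0], by
    rw [det_fin_two_of]; linear_combination inv_mul_cancel₀ hx⟩
  refine isConj_iff.mpr ⟨Q, mul_inv_eq_iff_eq_mul.mpr (Subtype.ext ?_)⟩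
  rw [coe_mul, coe_mul, diag2_coe', eta_fin_two A.1]
  simp only [Q, mul_fin_two, EmbeddingLike.apply_eq_iff_eq, vecCons_inj, and_true]
  refine ⟨⟨?_, ?_⟩, ?_, ?_⟩
  · linear_combination x * hroot + x * hdet
  · linear_combination hroot' + hdet
  · ring
  · ring

theorem isConj_of_trace_eq_add_inv {A B : SL(2, K)} {l : K} (hl : l ≠ 0) (hll : l ≠ l⁻¹)
    (hA : trace A.1 = l + l⁻¹) (hB : trace B.1 = l + l⁻¹) : IsConj A B := by
  have key : ∀ {C : SL(2, K)}, trace C.1 = l + l⁻¹ → IsConj (diag2 l hl) C := by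
    intro C hC
    obtain ⟨C', hCC', hc⟩ :=
      exists_isConj_apply_one_zero_ne_zero (notMem_center_of_trace_eq hll hC)
    exact (isConj_diag2 hc hl hll (trace_eq_of_isConj hCC' ▸ hC)).trans hCC'.symm
  exact (key hA).symm.trans (key hB)

end Field

theorem isConj_of_trace_eq {A B : SL(2, ℝ)} (h : trace A.1 = trace B.1)
    (h2 : 2 < |trace A.1|) : IsConj A B := by
  obtain ⟨l, hl, hll, hsum⟩ := exists_add_inv_eq_of_two_lt_abs h2
  exact isConj_of_trace_eq_add_inv hl hll hsum.symm (h ▸ hsum.symm)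

theorem exists_isConj_abs_trace_mul_eq {A B : SL(2, ℝ)} (hA : A ∉ Subgroup.center SL(2, ℝ))
    (hB : B ∉ Subgroup.center SL(2, ℝ)) :
    ∃ N, ∀ T, N ≤ T → ∃ A' B' : SL(2, ℝ), IsConj A A' ∧ IsConj B B' ∧ |trace (A' * B').1| = T := by
  obtain ⟨A₀, hAA₀, hA₀⟩ := exists_isConj_apply_one_zero_ne_zero hA
  obtain ⟨B₀, hBB₀, hB₀⟩ := exists_isConj_apply_one_zero_ne_zero hB
  obtain ⟨N, hN⟩ := exists_abs_quadratic_eq (neg_ne_zero.mpr (mul_ne_zero hA₀ hB₀))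
    (A₀.1 0 0 * B₀.1 1 0 - A₀.1 1 1 * B₀.1 1 0 + A₀.1 1 0 * (B₀.1 1 1 - B₀.1 0 0))
    (trace (A₀.1 * B₀.1))
  refine ⟨N, fun T hT => ?_⟩
  obtain ⟨m, hm⟩ := hN T hT
  let U : SL(2, ℝ) := ⟨!![1, m; 0, 1], by simp⟩
  refine ⟨A₀, U * B₀ * U⁻¹, hAA₀, hBB₀.trans (isConj_iff.mpr ⟨U, rfl⟩), ?_⟩
  have hU : U⁻¹.1 = !![1, -m; 0, 1] := by rw [coe_inv]; simp [U, adjugate_fin_two]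
  rw [coe_mul, coe_mul, coe_mul, hU, ← hm]
  exact congrArg _ (trace_mul_conj_upper_unitriangular _ _ m)

theorem exists_mul_eq_le_abs_trace (X : SL(2, ℝ)) (N : ℝ) :
    ∃ Y Z : SL(2, ℝ), Y * Z = X ∧ N ≤ |trace Y.1| ∧ N ≤ |trace Z.1| := by
  -- `Y = !![l, z; 0, l⁻¹]` and `Z = Y⁻¹ * X`, whose trace is the expression in the last conjunct
  suffices h : ∃ l z : ℝ, 0 < l ∧ N ≤ l ∧ N ≤ |l⁻¹ * X.1 0 0 - z * X.1 1 0 + l * X.1 1 1| by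
    obtain ⟨l, z, hl, hNl, hNZ⟩ := h
    let Y : SL(2, ℝ) := ⟨!![l, z; 0, l⁻¹], by simp [hl.ne']⟩
    refine ⟨Y, Y⁻¹ * X, mul_inv_cancel_left Y X, ?_, ?_⟩
    · have : 0 < l⁻¹ := inv_pos.mpr hl
      simp only [Y, trace_fin_two_of]
      rw [abs_of_pos (by positivity)]
      linarith
    · rw [coe_mul, coe_inv, eta_fin_two X.1]
      simpa [Y, adjugate_fin_two, trace_fin_two, ← sub_eq_add_neg] using hNZ
  have hdet := det_fin_two_apply X
  set p := X.1 0 0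
  set r := X.1 1 0
  set s := X.1 1 1
  set M := max N 1
  have hM : 0 < M := lt_of_lt_of_le one_pos (le_max_right N 1)
  by_cases hr : r = 0
  · have hps : p * s = 1 := by simpa [hr] using hdet
    have hs : 0 < |s| := abs_pos.mpr (right_ne_zero_of_mul_eq_one hps)
    refine ⟨M / |s| + M, 0, by positivity, ?_, ?_⟩
    · linarith [le_max_left N 1, div_nonneg hM.le hs.le]
    rw [zero_mul, sub_zero]
    refine le_trans ?_ (mul_abs_le_abs_inv_mul_add_mul hps (by positivity))
    rw [add_mul, div_mul_cancel₀ _ hs.ne']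
    linarith [le_max_left N 1, mul_nonneg hM.le hs.le]
  · refine ⟨M, (M⁻¹ * p + M * s - M) / r, hM, le_max_left _ _, ?_⟩
    have htr : M⁻¹ * p - (M⁻¹ * p + M * s - M) / r * r + M * s = M := by field_simp; ring
    rw [htr, abs_of_pos hM]
    exact le_max_left _ _

theorem trace_mul_le_of_isConj_S {A B : SL(2, ℝ)} (hA : IsConj (ModularGroup.S : SL(2, ℝ)) A)
    (hB : IsConj (ModularGroup.S : SL(2, ℝ)) B) : trace (A * B).1 ≤ -2 := by
  obtain ⟨P, rfl⟩ := isConj_iff.mp hA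
  obtain ⟨Q, rfl⟩ := isConj_iff.mp hB
  set S : SL(2, ℝ) := ↑ModularGroup.S
  have hconj : P * S * P⁻¹ * (Q * S * Q⁻¹) = P * (S * (P⁻¹ * Q * S * (P⁻¹ * Q)⁻¹)) * P⁻¹ := by
    group
  set M := P⁻¹ * Q
  have hdet := det_fin_two_apply M
  rw [hconj, trace_conj_s19, coe_mul, coe_mul, coe_mul, coe_inv, coe_S_cast, eta_fin_two M.1,
    adjugate_fin_two_of]
  simp only [mul_fin_two, trace_fin_two_of]
  nlinarith [sq_nonneg (M.1 0 0 - M.1 1 1), sq_nonneg (M.1 0 1 + M.1 1 0)]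

end SpecialLinearGroup

end Matrix

namespace PSL2R

open Matrix Matrix.SpecialLinearGroup

noncomputable def absTrace : PSL2R → ℝ :=
  Quotient.lift (fun A : SL(2, ℝ) => |trace A.1|) fun A B h => by
    have hAB : A⁻¹ * B ∈ Subgroup.center SL(2, ℝ) := QuotientGroup.leftRel_apply.mp h
    simpa using (abs_trace_mul_of_mem_center hAB A).symm

theorem absTrace_mk (A : SL(2, ℝ)) : absTrace (A : PSL2R) = |trace A.1| := rfl

theorem mk_neg (A : SL(2, ℝ)) : ((-A : SL(2, ℝ)) : PSL2R) = A := by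
  have h : (-1 : SL(2, ℝ)) ∈ Subgroup.center SL(2, ℝ) :=
    Subgroup.mem_center_iff.mpr fun g => by simp
  rw [← mul_neg_one, QuotientGroup.mk_mul, (QuotientGroup.eq_one_iff _).mpr h, mul_one]

theorem exists_isConj_mk_eq {A : SL(2, ℝ)} {b : PSL2R} (h : IsConj (A : PSL2R) b) :
    ∃ B : SL(2, ℝ), IsConj A B ∧ (B : PSL2R) = b :=
  MonoidHom.exists_isConj_map_eq (QuotientGroup.mk'_surjective _) h

theorem absTrace_inv (a : PSL2R) : absTrace a⁻¹ = absTrace a := by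
  induction a using QuotientGroup.induction_on with
  | H A => rw [← QuotientGroup.mk_inv, absTrace_mk, absTrace_mk, trace_inv_fin_two]

theorem _root_.IsConj.absTrace_eq {a b : PSL2R} (h : IsConj a b) : absTrace a = absTrace b := by
  induction a using QuotientGroup.induction_on with
  | H A =>
    obtain ⟨B, hAB, rfl⟩ := exists_isConj_mk_eq h
    rw [absTrace_mk, absTrace_mk, trace_eq_of_isConj hAB]

theorem isConj_of_absTrace_eq {a b : PSL2R} (h : absTrace a = absTrace b) (h2 : 2 < absTrace a) :
    IsConj a b := by
  induction a using QuotientGroup.induction_on with | H A => ?_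
  induction b using QuotientGroup.induction_on with | H B => ?_
  rw [absTrace_mk, absTrace_mk] at h
  rw [absTrace_mk] at h2
  rcases abs_eq_abs.mp h with h | h
  · exact (QuotientGroup.mk' _).map_isConj (isConj_of_trace_eq h h2)
  · rw [← mk_neg B]
    exact (QuotientGroup.mk' _).map_isConj (isConj_of_trace_eq (by simp [h]) h2)

theorem exists_isConj_absTrace_mul_eq {a b : PSL2R} (ha : a ≠ 1) (hb : b ≠ 1) :
    ∃ N, ∀ T, N ≤ T → ∃ a' b', IsConj a a' ∧ IsConj b b' ∧ absTrace (a' * b') = T := by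
  induction a using QuotientGroup.induction_on with | H A => ?_
  induction b using QuotientGroup.induction_on with | H B => ?_
  obtain ⟨N, hN⟩ := exists_isConj_abs_trace_mul_eq (mt (QuotientGroup.eq_one_iff A).mpr ha)
    (mt (QuotientGroup.eq_one_iff B).mpr hb)
  refine ⟨N, fun T hT => ?_⟩
  obtain ⟨A', B', hA, hB, hT⟩ := hN T hT
  exact ⟨A', B', (QuotientGroup.mk' _).map_isConj hA,
    (QuotientGroup.mk' _).map_isConj hB, hT⟩

theorem exists_isConj_mul_eq_of_le_absTrace {a b : PSL2R} (ha : a ≠ 1) (hb : b ≠ 1) :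
    ∃ N, ∀ y, N ≤ absTrace y → ∃ a' b', IsConj a a' ∧ IsConj b b' ∧ a' * b' = y := by
  obtain ⟨N, hN⟩ := exists_isConj_absTrace_mul_eq ha hb
  refine ⟨max N 3, fun y hy => ?_⟩
  obtain ⟨a', b', ha', hb', htr⟩ := hN (absTrace y) (le_of_max_le_left hy)
  have h2 : 2 < absTrace (a' * b') := by linarith [le_max_right N 3]
  exact exists_isConj_mul_eq_of_isConj_mul ha' hb' (isConj_of_absTrace_eq htr h2)

theorem exists_mul_eq_le_absTrace (x : PSL2R) (N : ℝ) :
    ∃ y z, y * z = x ∧ N ≤ absTrace y ∧ N ≤ absTrace z := by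
  induction x using QuotientGroup.induction_on with | H X => ?_
  obtain ⟨Y, Z, rfl, hY, hZ⟩ := exists_mul_eq_le_abs_trace X N
  exact ⟨Y, Z, rfl, hY, hZ⟩

theorem extCoverProp_four : ExtCoverProp PSL2R 4 := by
  intro g hg x
  obtain ⟨N₁, h₀₁⟩ := exists_isConj_mul_eq_of_le_absTrace (hg 0) (hg 1)
  obtain ⟨N₂, h₂₃⟩ := exists_isConj_mul_eq_of_le_absTrace (hg 2) (hg 3)
  obtain ⟨y, z, rfl, hy, hz⟩ := exists_mul_eq_le_absTrace x (max N₁ N₂)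
  obtain ⟨a₀, a₁, h₀, h₁, rfl⟩ := h₀₁ y (le_of_max_le_left hy)
  obtain ⟨a₂, a₃, h₂, h₃, rfl⟩ := h₂₃ z (le_of_max_le_right hz)
  refine ⟨![a₀, a₁, a₂, a₃], fun i => ?_, ?_⟩
  · fin_cases i <;> assumption
  · simp [List.ofFn_succ, mul_assoc]

theorem absTrace_eq_zero_of_isConj_S {a : PSL2R} (h : IsConj (ModularGroup.S : PSL2R) a) :
    absTrace a = 0 := by
  rw [← h.absTrace_eq, absTrace_mk, coe_S_cast]
  simp [trace_fin_two]

theorem two_le_absTrace_mul_of_isConj_S {a b : PSL2R} (ha : IsConj (ModularGroup.S : PSL2R) a)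
    (hb : IsConj (ModularGroup.S : PSL2R) b) : 2 ≤ absTrace (a * b) := by
  obtain ⟨A, hA, rfl⟩ := exists_isConj_mk_eq ha
  obtain ⟨B, hB, rfl⟩ := exists_isConj_mk_eq hb
  rw [← QuotientGroup.mk_mul, absTrace_mk]
  exact le_abs.mpr (Or.inr (by linarith [trace_mul_le_of_isConj_S hA hB]))

theorem not_coverProp_three : ¬ CoverProp PSL2R 3 := by
  intro h
  have hS : (ModularGroup.S : PSL2R) ≠ 1 := fun hS => by
    have htr := congrArg absTrace hS
    rw [← QuotientGroup.mk_one, absTrace_mk, absTrace_mk, coe_S_cast] at htr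
    simp [trace_fin_two] at htr
  obtain ⟨f, hf, hprod⟩ := h _ hS 1
  have h01 : f 0 * f 1 = (f 2)⁻¹ := by
    simp only [List.ofFn_succ, List.ofFn_zero, List.prod_cons, List.prod_nil, mul_one,
      Fin.succ_zero_eq_one, Fin.succ_one_eq_two] at hprod
    exact eq_inv_of_mul_eq_one_left (by rw [mul_assoc, hprod])
  have := two_le_absTrace_mul_of_isConj_S (hf 0) (hf 1)
  rw [h01, absTrace_inv, absTrace_eq_zero_of_isConj_S (hf 2)] at this
  norm_num at this

end PSL2R

theorem psl2r_covering_number_four :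
    ExtCoverProp PSL2R 4 ∧
    IsLeast {n : ℕ | CoverProp PSL2R n} 4 ∧
    IsLeast {n : ℕ | ExtCoverProp PSL2R n} 4 := by
  have four_le : ∀ n, CoverProp PSL2R n → 4 ≤ n := fun n hn => by
    by_contra! hn4
    exact PSL2R.not_coverProp_three (hn.mono (by omega))
  exact ⟨PSL2R.extCoverProp_four, ⟨PSL2R.extCoverProp_four.coverProp, four_le⟩,
    ⟨PSL2R.extCoverProp_four, fun n hn => four_le n hn.coverProp⟩⟩
end
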